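/- arXiv:1305.2187 — 10 statements merged into one kernel-verified Lean document; each statement's English description precedes it below -/
import Mathlib

section
/- Let H₀ be a bounded self-adjoint operator on the complex Hilbert space ℓ²(ℤᵈ), let Λ ⊆ ℤᵈ, and let V^Λ be a bounded self-adjoint operator on ℓ²(Λ). For every z ∈ ℂ with Im z ≠ 0: the restricted free resolvent G₀^Λ(z) is invertible in the bounded operators on ℓ²(Λ), the operator 1 − G₀^Λ(z)V^Λ is invertible, the operator G₀^Λ(z)⁻¹ − V^Λ is invertible, and the restricted perturbed resolvent satisfies G^Λ(z) = (G₀^Λ(z)⁻¹ − V^Λ)⁻¹ = (1 − G₀^Λ(z)V^Λ)⁻¹ G₀^Λ(z). -/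
/-!
Since `Im z ≠ 0` lies off the real spectrum, `z - H₀` and `z - H` are invertible, and the second
resolvent identity compressed by `Φ` gives the Dyson equations `G = G₀ + G₀ V G = G₀ + G V G₀`.
These exhibit `G` as a two-sided inverse of `G₀⁻¹ - V`, and `1 - G₀ V = G₀ (G₀⁻¹ - V)`.
The one analytic point is the invertibility of `G₀`: with `x = (z - H₀)⁻¹ Φ* f` one has
`⟪G₀ f, f⟫ = ⟪x, (z - H₀) x⟫`, whose imaginary part is `Im z ‖x‖²`, and `‖f‖ ≤ (|z| + ‖H₀‖) ‖x‖`,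
so `G₀` is coercive.
-/

noncomputable section

open ContinuousLinearMap
open scoped InnerProduct InnerProductSpace NNReal Ring

section Algebra

variable {R : Type*} [Ring R]

theorem Ring.inverse_sub_eq_of_dyson {g₀ g v : R} (hg₀ : IsUnit g₀)
    (hleft : g = g₀ + g₀ * v * g) (hright : g = g₀ + g * v * g₀) :
    IsUnit (g₀⁻¹ʳ - v) ∧ (g₀⁻¹ʳ - v)⁻¹ʳ = g := by
  have hmul_left : (g₀⁻¹ʳ - v) * g = 1 := by
    calc (g₀⁻¹ʳ - v) * g = g₀⁻¹ʳ * (g - g₀ * v * g) := by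
          rw [mul_sub, sub_mul, ← mul_assoc, ← mul_assoc, Ring.inverse_mul_cancel _ hg₀, one_mul]
      _ = 1 := by rw [sub_eq_of_eq_add hleft, Ring.inverse_mul_cancel _ hg₀]
  have hmul_right : g * (g₀⁻¹ʳ - v) = 1 := by
    calc g * (g₀⁻¹ʳ - v) = (g - g * v * g₀) * g₀⁻¹ʳ := by
          rw [mul_sub, sub_mul, mul_assoc _ g₀, Ring.mul_inverse_cancel _ hg₀, mul_one]
      _ = 1 := by rw [sub_eq_of_eq_add hright, Ring.mul_inverse_cancel _ hg₀]
  let u : Rˣ := ⟨g₀⁻¹ʳ - v, g, hmul_left, hmul_right⟩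
  exact ⟨u.isUnit, Ring.inverse_unit u⟩

theorem Ring.one_sub_mul_eq_of_dyson {g₀ g v : R} (hg₀ : IsUnit g₀)
    (hleft : g = g₀ + g₀ * v * g) (hright : g = g₀ + g * v * g₀) :
    IsUnit (1 - g₀ * v) ∧ (1 - g₀ * v)⁻¹ʳ * g₀ = g := by
  obtain ⟨hunit, hinv⟩ := Ring.inverse_sub_eq_of_dyson hg₀ hleft hright
  have hfactor : 1 - g₀ * v = g₀ * (g₀⁻¹ʳ - v) := by rw [mul_sub, Ring.mul_inverse_cancel _ hg₀]
  refine ⟨hfactor ▸ hg₀.mul hunit, ?_⟩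
  obtain ⟨u, hu⟩ := hg₀
  obtain ⟨w, hw⟩ := hunit
  rw [hfactor, ← hinv, ← hw, ← hu, ← Units.val_mul, Ring.inverse_unit, Ring.inverse_unit,
    mul_inv_rev, Units.val_mul, mul_assoc, Units.inv_mul, mul_one]

end Algebra

theorem Complex.norm_pos_of_im_ne_zero {z : ℂ} (hz : z.im ≠ 0) : 0 < ‖z‖ :=
  norm_pos_iff.mpr fun h ↦ hz (by simp [h])

section Resolvent

variable {E F : Type*} [NormedAddCommGroup E] [InnerProductSpace ℂ E] [CompleteSpace E]
  [NormedAddCommGroup F] [InnerProductSpace ℂ F] [CompleteSpace F]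

theorem IsSelfAdjoint.isUnit_smul_one_sub {H : E →L[ℂ] E} (hH : IsSelfAdjoint H) {z : ℂ}
    (hz : z.im ≠ 0) : IsUnit (z • (1 : E →L[ℂ] E) - H) := by
  rw [← Algebra.algebraMap_eq_smul_one]
  exact spectrum.notMem_iff.mp fun h ↦ hz (hH.im_eq_zero_of_mem_spectrum h)

theorem IsSelfAdjoint.im_inner_smul_one_sub_apply {H : E →L[ℂ] E} (hH : IsSelfAdjoint H)
    (z : ℂ) (x : E) : (⟪x, (z • (1 : E →L[ℂ] E) - H) x⟫_ℂ).im = z.im * ‖x‖ ^ 2 := by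
  have hreal : (⟪x, H x⟫_ℂ).im = 0 := hH.isSymmetric.im_inner_self_apply x
  simp [Complex.mul_im, hreal, sq]

theorem IsSelfAdjoint.sq_norm_mul_le_norm_inner_resolvent {H : E →L[ℂ] E} (hH : IsSelfAdjoint H)
    {z : ℂ} (hz : z.im ≠ 0) (y : E) :
    ‖y‖ ^ 2 * (|z.im| / (‖z‖ + ‖H‖) ^ 2) ≤ ‖⟪(z • (1 : E →L[ℂ] E) - H)⁻¹ʳ y, y⟫_ℂ‖ := by
  set A := z • (1 : E →L[ℂ] E) - H
  set x := A⁻¹ʳ y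
  have hAx : A x = y := by
    rw [← mul_apply_eq_comp, Ring.mul_inverse_cancel _ (hH.isUnit_smul_one_sub hz),
      one_apply_eq_self]
  have hD : 0 < ‖z‖ + ‖H‖ :=
    add_pos_of_pos_of_nonneg (Complex.norm_pos_of_im_ne_zero hz) (norm_nonneg H)
  have hy : ‖y‖ ≤ (‖z‖ + ‖H‖) * ‖x‖ :=
    calc ‖y‖ = ‖z • x - H x‖ := by rw [← hAx]; rfl
      _ ≤ ‖z‖ * ‖x‖ + ‖H‖ * ‖x‖ :=
        (norm_sub_le _ _).trans (add_le_add (norm_smul z x).le (H.le_opNorm x))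
      _ = (‖z‖ + ‖H‖) * ‖x‖ := by ring
  have him : |z.im| * ‖x‖ ^ 2 ≤ ‖⟪x, A x⟫_ℂ‖ := by
    rw [← abs_of_nonneg (sq_nonneg ‖x‖), ← abs_mul, ← hH.im_inner_smul_one_sub_apply]
    exact Complex.abs_im_le_norm _
  calc ‖y‖ ^ 2 * (|z.im| / (‖z‖ + ‖H‖) ^ 2)
      ≤ ((‖z‖ + ‖H‖) * ‖x‖) ^ 2 * (|z.im| / (‖z‖ + ‖H‖) ^ 2) := by gcongr
    _ = |z.im| * ‖x‖ ^ 2 := by field_simp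
    _ ≤ ‖⟪x, y⟫_ℂ‖ := hAx ▸ him

theorem ContinuousLinearMap.sq_norm_mul_le_norm_inner_comp_adjoint {T : E →L[ℂ] E}
    {Φ : E →L[ℂ] F} (hΦ : Φ ∘L Φ† = 1) {c : ℝ} (hT : ∀ x, ‖x‖ ^ 2 * c ≤ ‖⟪T x, x⟫_ℂ‖)
    (f : F) : ‖f‖ ^ 2 * c ≤ ‖⟪(Φ ∘L T ∘L Φ†) f, f⟫_ℂ‖ := by
  have hiso : ‖(Φ†) f‖ = ‖f‖ :=
    (norm_map_iff_adjoint_comp_self (Φ†)).mpr (by rwa [adjoint_adjoint]) f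
  rw [comp_apply, comp_apply, ← adjoint_inner_right, ← hiso]
  exact hT _

theorem IsSelfAdjoint.isUnit_comp_resolvent_comp_adjoint {H : E →L[ℂ] E} (hH : IsSelfAdjoint H)
    {z : ℂ} (hz : z.im ≠ 0) {Φ : E →L[ℂ] F} (hΦ : Φ ∘L Φ† = 1) :
    IsUnit (Φ ∘L (z • (1 : E →L[ℂ] E) - H)⁻¹ʳ ∘L Φ†) := by
  have hD : 0 < ‖z‖ + ‖H‖ :=
    add_pos_of_pos_of_nonneg (Complex.norm_pos_of_im_ne_zero hz) (norm_nonneg H)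
  let c : ℝ≥0 := ⟨|z.im| / (‖z‖ + ‖H‖) ^ 2, by positivity⟩
  have hc : 0 < c := NNReal.coe_pos.mp (div_pos (abs_pos.mpr hz) (pow_pos hD 2))
  exact isUnit_of_forall_le_norm_inner_map _ hc
    (sq_norm_mul_le_norm_inner_comp_adjoint hΦ (hH.sq_norm_mul_le_norm_inner_resolvent hz))

end Resolvent

section Compression

variable {𝕜 E F : Type*} [NontriviallyNormedField 𝕜] [NormedAddCommGroup E] [NormedSpace 𝕜 E]
  [NormedAddCommGroup F] [NormedSpace 𝕜 F]

theorem ContinuousLinearMap.dyson_of_sub_eq_comp {A B : E →L[𝕜] E} (hAB : IsUnit A ↔ IsUnit B)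
    {Φ : E →L[𝕜] F} {Ψ : F →L[𝕜] E} {V G₀ G : F →L[𝕜] F} (hV : A - B = Ψ ∘L V ∘L Φ)
    (hG₀ : G₀ = Φ ∘L A⁻¹ʳ ∘L Ψ) (hG : G = Φ ∘L B⁻¹ʳ ∘L Ψ) :
    G = G₀ + G₀ * V * G ∧ G = G₀ + G * V * G₀ := by
  have hleft : B⁻¹ʳ = A⁻¹ʳ + A⁻¹ʳ * (A - B) * B⁻¹ʳ := by
    rw [← neg_sub B A, mul_neg, neg_mul, ← Ring.inverse_sub_inverse hAB]; abel
  have hright : B⁻¹ʳ = A⁻¹ʳ + B⁻¹ʳ * (A - B) * A⁻¹ʳ := by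
    rw [← Ring.inverse_sub_inverse hAB.symm]; abel
  subst hG₀ hG
  rw [hV] at hleft hright
  constructor
  · conv_lhs => rw [hleft]
    simp only [mul_def, add_comp, comp_add, comp_assoc]
  · conv_lhs => rw [hright]
    simp only [mul_def, add_comp, comp_add, comp_assoc]

end Compression

theorem stmt0_general (d : ℕ) (Λ : Set (Fin d → ℤ))
    (H₀ : lp (fun _ : Fin d → ℤ => ℂ) 2 →L[ℂ] lp (fun _ : Fin d → ℤ => ℂ) 2)
    (hH₀ : IsSelfAdjoint H₀)
    (Φ : lp (fun _ : Fin d → ℤ => ℂ) 2 →L[ℂ] lp (fun _ : Λ => ℂ) 2)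
    (hΦcoiso : Φ ∘L ContinuousLinearMap.adjoint Φ = 1)
    (VΛ : lp (fun _ : Λ => ℂ) 2 →L[ℂ] lp (fun _ : Λ => ℂ) 2)
    (hVΛ : IsSelfAdjoint VΛ)
    (z : ℂ) (hz : z.im ≠ 0) :
    -- the full and restricted resolvents and the perturbed Hamiltonian
    ∀ G₀Λ GΛ : lp (fun _ : Λ => ℂ) 2 →L[ℂ] lp (fun _ : Λ => ℂ) 2,
      G₀Λ = Φ ∘L Ring.inverse (z • 1 - H₀) ∘L ContinuousLinearMap.adjoint Φ →
      GΛ = Φ ∘L Ring.inverse (z • 1 -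
          (H₀ + (ContinuousLinearMap.adjoint Φ) ∘L VΛ ∘L Φ)) ∘L ContinuousLinearMap.adjoint Φ →
      IsUnit G₀Λ ∧
      IsUnit (1 - G₀Λ * VΛ) ∧
      IsUnit (Ring.inverse G₀Λ - VΛ) ∧
      GΛ = Ring.inverse (Ring.inverse G₀Λ - VΛ) ∧
      GΛ = Ring.inverse (1 - G₀Λ * VΛ) * G₀Λ := by
  intro G₀Λ GΛ hG₀ hG
  have hH : IsSelfAdjoint (H₀ + Φ† ∘L VΛ ∘L Φ) := hH₀.add (hVΛ.adjoint_conj Φ)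
  have hG₀unit : IsUnit G₀Λ := hG₀ ▸ hH₀.isUnit_comp_resolvent_comp_adjoint hz hΦcoiso
  obtain ⟨hleft, hright⟩ := dyson_of_sub_eq_comp
    (iff_of_true (hH₀.isUnit_smul_one_sub hz) (hH.isUnit_smul_one_sub hz)) (by abel) hG₀ hG
  obtain ⟨hunit, hinv⟩ := Ring.inverse_sub_eq_of_dyson hG₀unit hleft hright
  obtain ⟨hunit', hinv'⟩ := Ring.one_sub_mul_eq_of_dyson hG₀unit hleft hright
  exact ⟨hG₀unit, hunit', hunit, hinv.symm, hinv'.symm⟩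

/-- For a bounded self-adjoint `H₀` on `ℓ²(ℤᵈ)`, a subset `Λ ⊆ ℤᵈ` with
restriction map `Φ : ℓ²(ℤᵈ) → ℓ²(Λ)`, and a bounded self-adjoint perturbation `VΛ` on `ℓ²(Λ)`:
for every `z` with `Im z ≠ 0`, the restricted free resolvent `G₀^Λ(z) = Φ (z - H₀)⁻¹ Φ*`
is invertible, `1 - G₀^Λ(z) VΛ` and `G₀^Λ(z)⁻¹ - VΛ` are invertible, and the restricted
perturbed resolvent satisfies
`G^Λ(z) = (G₀^Λ(z)⁻¹ - VΛ)⁻¹ = (1 - G₀^Λ(z) VΛ)⁻¹ G₀^Λ(z)`. -/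
theorem stmt0 (d : ℕ) (Λ : Set (Fin d → ℤ))
    (H₀ : lp (fun _ : Fin d → ℤ => ℂ) 2 →L[ℂ] lp (fun _ : Fin d → ℤ => ℂ) 2)
    (hH₀ : IsSelfAdjoint H₀)
    (Φ : lp (fun _ : Fin d → ℤ => ℂ) 2 →L[ℂ] lp (fun _ : Λ => ℂ) 2)
    (hΦ : ∀ (f : lp (fun _ : Fin d → ℤ => ℂ) 2) (n : Λ), (Φ f) n = f n)
    (hΦcoiso : Φ ∘L ContinuousLinearMap.adjoint Φ = 1)
    (VΛ : lp (fun _ : Λ => ℂ) 2 →L[ℂ] lp (fun _ : Λ => ℂ) 2)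
    (hVΛ : IsSelfAdjoint VΛ)
    (z : ℂ) (hz : z.im ≠ 0) :
    -- the full and restricted resolvents and the perturbed Hamiltonian
    ∀ G₀Λ GΛ : lp (fun _ : Λ => ℂ) 2 →L[ℂ] lp (fun _ : Λ => ℂ) 2,
      G₀Λ = Φ ∘L Ring.inverse (z • 1 - H₀) ∘L ContinuousLinearMap.adjoint Φ →
      GΛ = Φ ∘L Ring.inverse (z • 1 -
          (H₀ + (ContinuousLinearMap.adjoint Φ) ∘L VΛ ∘L Φ)) ∘L ContinuousLinearMap.adjoint Φ →
      IsUnit G₀Λ ∧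
      IsUnit (1 - G₀Λ * VΛ) ∧
      IsUnit (Ring.inverse G₀Λ - VΛ) ∧
      GΛ = Ring.inverse (Ring.inverse G₀Λ - VΛ) ∧
      GΛ = Ring.inverse (1 - G₀Λ * VΛ) * G₀Λ :=
  stmt0_general d Λ H₀ hH₀ Φ hΦcoiso VΛ hVΛ z hz
end
end

section
/- Let H₀ be a bounded self-adjoint operator on ℓ²(ℤᵈ), Λ ⊆ ℤᵈ, and V^Λ a bounded self-adjoint operator on ℓ²(Λ). For every z ∈ ℂ with Im z ≠ 0, both 1 − G₀^Λ(z)V^Λ and 1 − V^ΛG₀^Λ(z) are invertible in the bounded operators on ℓ²(Λ), and the two expressions for the T-matrix coincide: V^Λ(1 − G₀^Λ(z)V^Λ)⁻¹ = (1 − V^ΛG₀^Λ(z))⁻¹V^Λ. -/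
set_option maxHeartbeats 1000000

noncomputable section

open ContinuousLinearMap

/-- Nonreal `z` is in the resolvent set of a selfadjoint bounded operator. -/
lemma aux_isUnit {H : Type*} [NormedAddCommGroup H] [InnerProductSpace ℂ H]
    [CompleteSpace H] (T : H →L[ℂ] H) (hT : IsSelfAdjoint T) (z : ℂ) (hz : z.im ≠ 0) :
    IsUnit (z • (1 : H →L[ℂ] H) - T) := by
  have hmem : z ∉ spectrum ℂ T := by
    intro h
    have := hT.mem_spectrum_eq_re h
    apply hz
    rw [this]
    simp
  rw [spectrum.notMem_iff] at hmem
  simpa [Algebra.algebraMap_eq_smul_one] using hmem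

/-- For a bounded self-adjoint `H₀` on `ℓ²(ℤᵈ)`, `Λ ⊆ ℤᵈ` with restriction map
`Φ`, and a bounded self-adjoint `VΛ` on `ℓ²(Λ)`: for every `z` with `Im z ≠ 0`, both
`1 - G₀^Λ(z) VΛ` and `1 - VΛ G₀^Λ(z)` are invertible and the two expressions for the T-matrix
coincide: `VΛ (1 - G₀^Λ(z) VΛ)⁻¹ = (1 - VΛ G₀^Λ(z))⁻¹ VΛ`. -/
theorem stmt1 (d : ℕ) (Λ : Set (Fin d → ℤ))
    (H₀ : lp (fun _ : Fin d → ℤ => ℂ) 2 →L[ℂ] lp (fun _ : Fin d → ℤ => ℂ) 2)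
    (hH₀ : IsSelfAdjoint H₀)
    (Φ : lp (fun _ : Fin d → ℤ => ℂ) 2 →L[ℂ] lp (fun _ : Λ => ℂ) 2)
    (hΦ : ∀ (f : lp (fun _ : Fin d → ℤ => ℂ) 2) (n : Λ), (Φ f) n = f n)
    (hΦcoiso : Φ ∘L ContinuousLinearMap.adjoint Φ = 1)
    (VΛ : lp (fun _ : Λ => ℂ) 2 →L[ℂ] lp (fun _ : Λ => ℂ) 2)
    (hVΛ : IsSelfAdjoint VΛ)
    (z : ℂ) (hz : z.im ≠ 0) :
    ∀ G₀Λ : lp (fun _ : Λ => ℂ) 2 →L[ℂ] lp (fun _ : Λ => ℂ) 2,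
      G₀Λ = Φ ∘L Ring.inverse (z • 1 - H₀) ∘L ContinuousLinearMap.adjoint Φ →
      IsUnit (1 - G₀Λ * VΛ) ∧
      IsUnit (1 - VΛ * G₀Λ) ∧
      VΛ * Ring.inverse (1 - G₀Λ * VΛ) = Ring.inverse (1 - VΛ * G₀Λ) * VΛ := by
  intro G₀Λ hG
  set Ψ := ContinuousLinearMap.adjoint Φ with hΨ
  set W := Ψ ∘L VΛ ∘L Φ with hW
  have hWsa : IsSelfAdjoint W := hVΛ.adjoint_conj Φ
  have hA : IsUnit (z • (1 : _) - H₀) := aux_isUnit H₀ hH₀ z hz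
  have hB : IsUnit (z • (1 : _) - (H₀ + W)) := aux_isUnit _ (hH₀.add hWsa) z hz
  set R₀ := Ring.inverse (z • (1 : lp (fun _ : Fin d → ℤ => ℂ) 2 →L[ℂ] _) - H₀) with hR₀
  set R := Ring.inverse (z • (1 : lp (fun _ : Fin d → ℤ => ℂ) 2 →L[ℂ] _) - (H₀ + W)) with hR
  have hA1 : R₀ * (z • 1 - H₀) = 1 := Ring.inverse_mul_cancel _ hA
  have hA2 : (z • 1 - H₀) * R₀ = 1 := Ring.mul_inverse_cancel _ hA
  clear_value W
  have hB1 : R * (z • 1 - (H₀ + W)) = 1 := Ring.inverse_mul_cancel _ hB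
  have hB2 : (z • 1 - (H₀ + W)) * R = 1 := Ring.mul_inverse_cancel _ hB
  clear_value R₀ R
  -- resolvent identities
  have hres1 : R₀ * W * R = R - R₀ := by
    have : (z • 1 - H₀) * R = 1 + W * R := by
      have h' : (z • 1 - H₀) = (z • 1 - (H₀ + W)) + W := by abel
      rw [h', add_mul, hB2]
    calc R₀ * W * R = R₀ * ((z • 1 - H₀) * R) - R₀ := by
          rw [this]; noncomm_ring
      _ = R - R₀ := by rw [← mul_assoc, hA1, one_mul]
  have hres2 : R * W * R₀ = R - R₀ := by
    have : R * (z • 1 - H₀) = 1 + R * W := by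
      have h' : (z • 1 - H₀) = (z • 1 - (H₀ + W)) + W := by abel
      rw [h', mul_add, hB1]
    calc R * W * R₀ = R * (z • 1 - H₀) * R₀ - R₀ := by
          rw [this]; noncomm_ring
      _ = R - R₀ := by rw [mul_assoc, hA2, mul_one]
  set G := Φ ∘L R ∘L Ψ with hGdef
  clear_value G
  -- key identities
  have key1 : G₀Λ * VΛ * G = G - G₀Λ := by
    have : G₀Λ * VΛ * G = Φ ∘L (R₀ * W * R) ∘L Ψ := by
      rw [hG, hGdef, hW]
      simp only [ContinuousLinearMap.mul_def, ContinuousLinearMap.comp_assoc]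
    rw [this, hres1, hG, hGdef]
    simp only [ContinuousLinearMap.comp_sub, ContinuousLinearMap.sub_comp]
  have key2 : G * VΛ * G₀Λ = G - G₀Λ := by
    have : G * VΛ * G₀Λ = Φ ∘L (R * W * R₀) ∘L Ψ := by
      rw [hG, hGdef, hW]
      simp only [ContinuousLinearMap.mul_def, ContinuousLinearMap.comp_assoc]
    rw [this, hres2, hG, hGdef]
    simp only [ContinuousLinearMap.comp_sub, ContinuousLinearMap.sub_comp]
  -- inverses
  have h1 : (1 - G₀Λ * VΛ) * (1 + G * VΛ) = 1 := by
    have : (1 - G₀Λ * VΛ) * (1 + G * VΛ)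
        = 1 + G * VΛ - G₀Λ * VΛ - (G₀Λ * VΛ * G) * VΛ := by noncomm_ring
    rw [this, key1, sub_mul]
    abel
  have h2 : (1 + G * VΛ) * (1 - G₀Λ * VΛ) = 1 := by
    have : (1 + G * VΛ) * (1 - G₀Λ * VΛ)
        = 1 + G * VΛ - G₀Λ * VΛ - (G * VΛ * G₀Λ) * VΛ := by noncomm_ring
    rw [this, key2, sub_mul]
    abel
  have h3 : (1 - VΛ * G₀Λ) * (1 + VΛ * G) = 1 := by
    have : (1 - VΛ * G₀Λ) * (1 + VΛ * G)
        = 1 + VΛ * G - VΛ * G₀Λ - VΛ * (G₀Λ * VΛ * G) := by noncomm_ring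
    rw [this, key1, mul_sub]
    abel
  have h4 : (1 + VΛ * G) * (1 - VΛ * G₀Λ) = 1 := by
    have : (1 + VΛ * G) * (1 - VΛ * G₀Λ)
        = 1 + VΛ * G - VΛ * G₀Λ - VΛ * (G * VΛ * G₀Λ) := by noncomm_ring
    rw [this, key2, mul_sub]
    abel
  have hu1 : IsUnit (1 - G₀Λ * VΛ) := ⟨⟨1 - G₀Λ * VΛ, 1 + G * VΛ, h1, h2⟩, rfl⟩
  have hu2 : IsUnit (1 - VΛ * G₀Λ) := ⟨⟨1 - VΛ * G₀Λ, 1 + VΛ * G, h3, h4⟩, rfl⟩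
  refine ⟨hu1, hu2, ?_⟩
  have e1 : Ring.inverse (1 - G₀Λ * VΛ) = 1 + G * VΛ :=
    Ring.inverse_unit ⟨1 - G₀Λ * VΛ, 1 + G * VΛ, h1, h2⟩
  have e2 : Ring.inverse (1 - VΛ * G₀Λ) = 1 + VΛ * G :=
    Ring.inverse_unit ⟨1 - VΛ * G₀Λ, 1 + VΛ * G, h3, h4⟩
  rw [e1, e2]
  noncomm_ring
end
end

section
/- Let H₀ be a bounded self-adjoint operator on ℓ²(ℤᵈ), Λ ⊆ ℤᵈ, V^Λ a bounded self-adjoint operator on ℓ²(Λ), V = Π*V^ΛΠ and H = H₀ + V. For every z ∈ ℂ with Im z ≠ 0, with T^Λ(z) = (1 − V^ΛG₀^Λ(z))⁻¹V^Λ (which is well defined since 1 − V^ΛG₀^Λ(z) is invertible), the second resolvent identity holds: (z − H)⁻¹ = (z − H₀)⁻¹ + (z − H₀)⁻¹ Π* T^Λ(z) Π (z − H₀)⁻¹. -/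
noncomputable section

open ContinuousLinearMap


lemma myRingInv {M : Type*} [MonoidWithZero M] {x y : M} (h1 : x * y = 1) (h2 : y * x = 1) :
    Ring.inverse x = y := by
  have := Ring.inverse_unit ⟨x, y, h1, h2⟩
  simpa using this

lemma key1 {E F : Type*} [NormedAddCommGroup E] [NormedSpace ℂ E] [NormedAddCommGroup F]
    [NormedSpace ℂ F] (a : E →L[ℂ] F) (b : F →L[ℂ] E) (u : E →L[ℂ] E)
    (h : (b ∘L a) ∘L u = u - 1) :
    (1 - a ∘L b) ∘L (1 + a ∘L u ∘L b) = 1 := by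
  have e : (a ∘L b) ∘L (a ∘L u ∘L b) = a ∘L ((b ∘L a) ∘L u) ∘L b := by
    simp only [comp_assoc]
  simp only [sub_comp, comp_add, add_comp, one_def, id_comp, comp_id, e, h, comp_sub, sub_comp]
  simp only [← one_def, comp_id, id_comp]
  abel

lemma key2 {E F : Type*} [NormedAddCommGroup E] [NormedSpace ℂ E] [NormedAddCommGroup F]
    [NormedSpace ℂ F] (a : E →L[ℂ] F) (b : F →L[ℂ] E) (u : E →L[ℂ] E)
    (h : u ∘L (b ∘L a) = u - 1) :
    (1 + a ∘L u ∘L b) ∘L (1 - a ∘L b) = 1 := by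
  have e : (a ∘L u ∘L b) ∘L (a ∘L b) = a ∘L (u ∘L (b ∘L a)) ∘L b := by
    simp only [comp_assoc]
  simp only [comp_sub, add_comp, comp_add, one_def, id_comp, comp_id, e, h, sub_comp, comp_sub]
  simp only [← one_def, comp_id, id_comp]
  abel


lemma ringA' {R : Type*} [Ring R] {A B iA iB W : R} (hiAA : iA * A = 1) (hBiB : B * iB = 1)
    (hW : W = A - B) : (W * iA) * (A * iB) = A * iB - 1 := by
  have e : ((A - B) * iA) * (A * iB) = A * ((iA * A) * iB) - B * ((iA * A) * iB) := by
    noncomm_ring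
  rw [hW, e, hiAA, one_mul, hBiB]

lemma ringB' {R : Type*} [Ring R] {A B iA iB W : R} (hAiA : A * iA = 1) (hiBB : iB * B = 1)
    (hW : W = A - B) : (A * iB) * (W * iA) = A * iB - 1 := by
  have e : (A * iB) * ((A - B) * iA) = A * (iB * (A * iA)) - A * ((iB * B) * iA) := by
    noncomm_ring
  rw [hW, e, hAiA, mul_one, hiBB, one_mul, hAiA]

lemma ringF' {R : Type*} [Ring R] {A B iA iB W : R} (hAiA : A * iA = 1) (hiAA : iA * A = 1)
    (hBiB : B * iB = 1) (hiBB : iB * B = 1) (hW : W = A - B) :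
    iA + iA * ((W + W * iB * W) * iA) = iB := by
  have h1 : iA * (W * iB) = iB - iA := by
    have e : iA * ((A - B) * iB) = (iA * A) * iB - iA * (B * iB) := by noncomm_ring
    rw [hW, e, hiAA, one_mul, hBiB, mul_one]
  have h2 : iB * (W * iA) = iB - iA := by
    have e : iB * ((A - B) * iA) = iB * (A * iA) - (iB * B) * iA := by noncomm_ring
    rw [hW, e, hAiA, mul_one, hiBB, one_mul]
  calc iA + iA * ((W + W * iB * W) * iA)
      = iA + iA * (W * iA) + iA * (W * (iB * (W * iA))) := by noncomm_ring
    _ = iA + iA * (W * iA) + iA * (W * (iB - iA)) := by rw [h2]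
    _ = iA + iA * (W * iA) + (iA * (W * iB) - iA * (W * iA)) := by noncomm_ring
    _ = iA + iA * (W * iA) + ((iB - iA) - iA * (W * iA)) := by rw [h1]
    _ = iB := by abel

set_option maxHeartbeats 1000000 in
/-- With `H = H₀ + Φ* VΛ Φ` and the T-matrix
`T^Λ(z) = (1 - VΛ G₀^Λ(z))⁻¹ VΛ`, the second resolvent identity holds for `Im z ≠ 0`:
`(z - H)⁻¹ = (z - H₀)⁻¹ + (z - H₀)⁻¹ Φ* T^Λ(z) Φ (z - H₀)⁻¹`. -/
theorem stmt2 (d : ℕ) (Λ : Set (Fin d → ℤ))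
    (H₀ : lp (fun _ : Fin d → ℤ => ℂ) 2 →L[ℂ] lp (fun _ : Fin d → ℤ => ℂ) 2)
    (hH₀ : IsSelfAdjoint H₀)
    (Φ : lp (fun _ : Fin d → ℤ => ℂ) 2 →L[ℂ] lp (fun _ : Λ => ℂ) 2)
    (hΦ : ∀ (f : lp (fun _ : Fin d → ℤ => ℂ) 2) (n : Λ), (Φ f) n = f n)
    (hΦcoiso : Φ ∘L ContinuousLinearMap.adjoint Φ = 1)
    (VΛ : lp (fun _ : Λ => ℂ) 2 →L[ℂ] lp (fun _ : Λ => ℂ) 2)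
    (hVΛ : IsSelfAdjoint VΛ)
    (z : ℂ) (hz : z.im ≠ 0) :
    ∀ G₀Λ TΛ : lp (fun _ : Λ => ℂ) 2 →L[ℂ] lp (fun _ : Λ => ℂ) 2,
      G₀Λ = Φ ∘L Ring.inverse (z • 1 - H₀) ∘L ContinuousLinearMap.adjoint Φ →
      TΛ = Ring.inverse (1 - VΛ * G₀Λ) * VΛ →
      IsUnit (1 - VΛ * G₀Λ) ∧
      Ring.inverse (z • 1 - (H₀ + (ContinuousLinearMap.adjoint Φ) ∘L VΛ ∘L Φ)) =
        Ring.inverse (z • 1 - H₀) +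
          Ring.inverse (z • 1 - H₀) ∘L
            ((ContinuousLinearMap.adjoint Φ) ∘L TΛ ∘L Φ) ∘L Ring.inverse (z • 1 - H₀) := by
  intro G₀Λ TΛ hG hT
  set Ψ := ContinuousLinearMap.adjoint Φ with hΨdef
  set W : lp (fun _ : Fin d → ℤ => ℂ) 2 →L[ℂ] lp (fun _ : Fin d → ℤ => ℂ) 2 :=
    Ψ ∘L VΛ ∘L Φ with hWdef
  set A : lp (fun _ : Fin d → ℤ => ℂ) 2 →L[ℂ] lp (fun _ : Fin d → ℤ => ℂ) 2 :=
    z • 1 - H₀ with hAdef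
  set B : lp (fun _ : Fin d → ℤ => ℂ) 2 →L[ℂ] lp (fun _ : Fin d → ℤ => ℂ) 2 :=
    z • 1 - (H₀ + W) with hBdef
  -- self-adjointness of H₀ + W
  have hWsa : IsSelfAdjoint W := by
    rw [IsSelfAdjoint, star_eq_adjoint, hWdef, adjoint_comp, adjoint_comp, adjoint_adjoint,
      ← star_eq_adjoint, hVΛ, hΨdef, comp_assoc]
  have hHsa : IsSelfAdjoint (H₀ + W) := hH₀.add hWsa
  -- invertibility of A and B
  have unitOf : ∀ (T : lp (fun _ : Fin d → ℤ => ℂ) 2 →L[ℂ] lp (fun _ : Fin d → ℤ => ℂ) 2),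
      IsSelfAdjoint T → IsUnit (z • 1 - T) := by
    intro T hT'
    have h : z ∉ spectrum ℂ T := fun h => hz (hT'.im_eq_zero_of_mem_spectrum h)
    rw [spectrum.notMem_iff] at h
    simpa [Algebra.algebraMap_eq_smul_one] using h
  have hA : IsUnit A := unitOf H₀ hH₀
  have hB : IsUnit B := unitOf (H₀ + W) hHsa
  set iA := Ring.inverse A with hiAdef
  set iB := Ring.inverse B with hiBdef
  have hAiA : A * iA = 1 := Ring.mul_inverse_cancel A hA
  have hiAA : iA * A = 1 := Ring.inverse_mul_cancel A hA
  have hBiB : B * iB = 1 := Ring.mul_inverse_cancel B hB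
  have hiBB : iB * B = 1 := Ring.inverse_mul_cancel B hB
  have hWAB : W = A - B := by rw [hAdef, hBdef]; abel
  -- the heterogeneous setup
  set a : lp (fun _ : Fin d → ℤ => ℂ) 2 →L[ℂ] lp (fun _ : Λ => ℂ) 2 := VΛ ∘L Φ ∘L iA with hadef
  set u : lp (fun _ : Fin d → ℤ => ℂ) 2 →L[ℂ] lp (fun _ : Fin d → ℤ => ℂ) 2 := A ∘L iB with hudef
  have hab : VΛ * G₀Λ = a ∘L Ψ := by
    rw [hG, hadef]; simp only [mul_def, comp_assoc]
  have hba : Ψ ∘L a = W * iA := by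
    rw [hadef, hWdef]; simp only [mul_def, comp_assoc]
  have hcomm1 : (Ψ ∘L a) ∘L u = u - 1 := by
    rw [hba, hudef]
    simpa only [mul_def, comp_assoc] using ringA' hiAA hBiB hWAB
  have hcomm2 : u ∘L (Ψ ∘L a) = u - 1 := by
    rw [hba, hudef]
    simpa only [mul_def, comp_assoc] using ringB' hAiA hiBB hWAB
  have hk1 : (1 - VΛ * G₀Λ) * (1 + a ∘L u ∘L Ψ) = 1 := by
    rw [hab]; exact key1 a Ψ u hcomm1
  have hk2 : (1 + a ∘L u ∘L Ψ) * (1 - VΛ * G₀Λ) = 1 := by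
    rw [hab]; exact key2 a Ψ u hcomm2
  have hUnit : IsUnit (1 - VΛ * G₀Λ) := ⟨⟨_, _, hk1, hk2⟩, rfl⟩
  refine ⟨hUnit, ?_⟩
  have hTval : TΛ = (1 + a ∘L u ∘L Ψ) * VΛ := by rw [hT, myRingInv hk1 hk2]
  -- compute Ψ ∘L TΛ ∘L Φ
  have hmid : Ψ ∘L TΛ ∘L Φ = W + W * iB * W := by
    rw [hTval]
    have expand : Ψ ∘L ((1 + a ∘L u ∘L Ψ) * VΛ) ∘L Φ
        = Ψ ∘L VΛ ∘L Φ + (Ψ ∘L a) ∘L u ∘L (Ψ ∘L VΛ ∘L Φ) := by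
      simp only [mul_def, add_comp, comp_add, one_def, id_comp, comp_id, comp_assoc]
    rw [expand, hba, ← hWdef, hudef]
    have e : (W * iA) ∘L (A ∘L iB) ∘L W = W * (iA * A) * iB * W := by
      simp only [mul_def, comp_assoc]
    rw [e, hiAA, mul_one]
  rw [hmid]
  have e : iA ∘L (W + W * iB * W) ∘L iA = iA * ((W + W * iB * W) * iA) := by
    simp only [mul_def]
  rw [e]
  exact (ringF' hAiA hiAA hBiB hiBB hWAB).symm
end
end

section
/- Let 𝓗 be a complex Hilbert space, V a bounded self-adjoint operator on 𝓗, 𝒱 the closure of the range of V, and π : 𝓗 → 𝒱 the orthogonal projection onto 𝒱 (so π* is the inclusion of 𝒱 into 𝓗). Let G be a bounded operator on 𝓗 such that 1 − VG is invertible, and assume the compression πVπ* is invertible in the bounded operators on 𝒱. Then the operator (πVπ*)⁻¹ − πGπ* is invertible on 𝒱 and (1 − VG)⁻¹V = π*((πVπ*)⁻¹ − πGπ*)⁻¹π. -/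
/-!
Because `Ran V ⊆ 𝒱` and `π π* = 1`, we have `π* π V = V`; taking adjoints gives `V π* π = V`, so
`V = π* A π` with `A = π V π*`. Hence `1 - V G = 1 - a b` with `a = π* A` and `b = π G`. By
Jacobson's lemma `1 - b a = (A⁻¹ - π G π*) A` is invertible together with `1 - a b`, and the
push-through identity `(1 - a b)⁻¹ a = a (1 - b a)⁻¹` gives
`(1 - V G)⁻¹ V = π* A ((A⁻¹ - π G π*) A)⁻¹ π = π* (A⁻¹ - π G π*)⁻¹ π`.
-/

namespace ContinuousLinearMap

section Algebra

variable {R : Type*} [Ring R]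
  {E : Type*} [TopologicalSpace E] [AddCommGroup E] [Module R E] [IsTopologicalAddGroup E]
  {F : Type*} [TopologicalSpace F] [AddCommGroup F] [Module R F] [IsTopologicalAddGroup F]
  {a : F →L[R] E} {b : E →L[R] F}

theorem one_add_comp_mul_one_sub_comp {S : E →L[R] E} (hS : S * (1 - a ∘L b) = 1) :
    (1 + b ∘L S ∘L a) * (1 - b ∘L a) = 1 := by
  ext x
  have hSa := congr(b ($hS (a x)))
  simp only [mul_apply_eq_comp, comp_apply, sub_apply, one_apply_eq_self, map_sub] at hSa
  simp only [mul_apply_eq_comp, comp_apply, add_apply, sub_apply, one_apply_eq_self, map_sub]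
  linear_combination (norm := module) hSa

theorem one_sub_comp_mul_one_add_comp {S : E →L[R] E} (hS : (1 - a ∘L b) * S = 1) :
    (1 - b ∘L a) * (1 + b ∘L S ∘L a) = 1 := by
  ext x
  have hSa := congr(b ($hS (a x)))
  simp only [mul_apply_eq_comp, comp_apply, sub_apply, one_apply_eq_self, map_sub] at hSa
  simp only [mul_apply_eq_comp, comp_apply, add_apply, sub_apply, one_apply_eq_self, map_add]
  linear_combination (norm := module) hSa

theorem isUnit_one_sub_comp_swap (h : IsUnit (1 - a ∘L b)) : IsUnit (1 - b ∘L a) :=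
  ⟨⟨1 - b ∘L a, _, one_sub_comp_mul_one_add_comp (Ring.mul_inverse_cancel _ h),
      one_add_comp_mul_one_sub_comp (Ring.inverse_mul_cancel _ h)⟩, rfl⟩

theorem inverse_one_sub_comp_swap (h : IsUnit (1 - a ∘L b)) :
    Ring.inverse (1 - b ∘L a) = 1 + b ∘L Ring.inverse (1 - a ∘L b) ∘L a :=
  left_inv_eq_right_inv (Ring.inverse_mul_cancel _ (isUnit_one_sub_comp_swap h))
    (one_sub_comp_mul_one_add_comp (Ring.mul_inverse_cancel _ h))

theorem inverse_one_sub_comp_comp (h : IsUnit (1 - a ∘L b)) :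
    Ring.inverse (1 - a ∘L b) ∘L a = a ∘L Ring.inverse (1 - b ∘L a) := by
  rw [inverse_one_sub_comp_swap h]
  ext x
  have hS := congr($(Ring.mul_inverse_cancel _ h) (a x))
  simp only [mul_apply_eq_comp, comp_apply, sub_apply, one_apply_eq_self] at hS
  simp only [comp_apply, add_apply, one_apply_eq_self, map_add]
  linear_combination (norm := module) hS

theorem isUnit_inverse_sub_and_inverse_one_sub_mul_mul {j : F →L[R] E} {π : E →L[R] F}
    {A : F →L[R] F} {V G : E →L[R] E} (hV : V = j ∘L A ∘L π) (hA : IsUnit A)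
    (hVG : IsUnit (1 - V * G)) :
    IsUnit (Ring.inverse A - π ∘L G ∘L j) ∧
      Ring.inverse (1 - V * G) * V = j ∘L Ring.inverse (Ring.inverse A - π ∘L G ∘L j) ∘L π := by
  set B := Ring.inverse A - π ∘L G ∘L j
  have hVG' : V * G = (j ∘L A) ∘L (π ∘L G) := by simp only [hV, mul_def, comp_assoc]
  rw [hVG'] at hVG ⊢
  have hBA : 1 - (π ∘L G) ∘L (j ∘L A) = B * A := by
    rw [sub_mul, Ring.inverse_mul_cancel _ hA]
    simp only [mul_def, comp_assoc]
  have hB : B = (1 - (π ∘L G) ∘L (j ∘L A)) * Ring.inverse A := by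
    rw [hBA, mul_assoc, Ring.mul_inverse_cancel _ hA, mul_one]
  refine ⟨hB ▸ (isUnit_one_sub_comp_swap hVG).mul hA.ringInverse, ?_⟩
  calc Ring.inverse (1 - (j ∘L A) ∘L π ∘L G) * V
      = (Ring.inverse (1 - (j ∘L A) ∘L π ∘L G) ∘L j ∘L A) ∘L π := by
        simp only [hV, mul_def, comp_assoc]
    _ = j ∘L (A * Ring.inverse (B * A)) ∘L π := by
        rw [inverse_one_sub_comp_comp hVG, hBA]
        simp only [mul_def, comp_assoc]
    _ = j ∘L Ring.inverse B ∘L π := by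
        rw [Ring.inverse_mul (.inr hA), ← mul_assoc, Ring.mul_inverse_cancel _ hA, one_mul]

end Algebra

theorem eq_subtypeL_comp_compression_comp {𝕜 : Type*} [RCLike 𝕜]
    {E : Type*} [NormedAddCommGroup E] [InnerProductSpace 𝕜 E] [CompleteSpace E]
    {V : E →L[𝕜] E} (hV : IsSelfAdjoint V) {K : Submodule 𝕜 E} [CompleteSpace K]
    (hVK : LinearMap.range (V : E →ₗ[𝕜] E) ≤ K) {π : E →L[𝕜] K}
    (hπ : adjoint π = K.subtypeL) :
    V = K.subtypeL ∘L (π ∘L V ∘L K.subtypeL) ∘L π := by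
  have hj : adjoint K.subtypeL = π := by rw [← hπ, adjoint_adjoint]
  have hπj : π ∘L K.subtypeL = .id 𝕜 K := by
    ext x
    simp [← hj, K.adjoint_subtypeL, Submodule.orthogonalProjectionOnto_mem_subspace_eq_self]
  have hV_left : K.subtypeL ∘L π ∘L V = V := by
    have hV_cod : V = K.subtypeL ∘L V.codRestrict K (fun x ↦ hVK ⟨x, rfl⟩) := rfl
    rw [hV_cod, ← comp_assoc π, hπj, id_comp]
  have hV_right : V ∘L K.subtypeL ∘L π = V :=
    calc V ∘L K.subtypeL ∘L π = adjoint (K.subtypeL ∘L π ∘L V) := by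
          rw [adjoint_comp, adjoint_comp, hj, hπ, hV.adjoint_eq, comp_assoc]
      _ = V := by rw [hV_left, hV.adjoint_eq]
  calc V = K.subtypeL ∘L π ∘L V ∘L K.subtypeL ∘L π := by rw [hV_right, hV_left]
    _ = K.subtypeL ∘L (π ∘L V ∘L K.subtypeL) ∘L π := by simp only [comp_assoc]

end ContinuousLinearMap

/-- Let `V` be a bounded self-adjoint operator on a complex Hilbert space `𝓗`,
`K` the closure of its range, `π : 𝓗 → K` the orthogonal projection (characterized by
`π* = inclusion`). If `1 - V G` is invertible and the compression `π V π*` is invertible on `K`,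
then `(π V π*)⁻¹ - π G π*` is invertible on `K` and
`(1 - V G)⁻¹ V = π* ((π V π*)⁻¹ - π G π*)⁻¹ π`. -/
theorem stmt3 {𝓗 : Type*} [NormedAddCommGroup 𝓗] [InnerProductSpace ℂ 𝓗] [CompleteSpace 𝓗]
    (V G : 𝓗 →L[ℂ] 𝓗) (hV : IsSelfAdjoint V)
    (K : Submodule ℂ 𝓗) (hK : K = (LinearMap.range (V : 𝓗 →ₗ[ℂ] 𝓗)).topologicalClosure)
    [CompleteSpace K]
    (π : 𝓗 →L[ℂ] K) (hπ : ContinuousLinearMap.adjoint π = K.subtypeL)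
    (hVG : IsUnit (1 - V * G))
    (hcomp : IsUnit (π ∘L V ∘L K.subtypeL)) :
    IsUnit (Ring.inverse (π ∘L V ∘L K.subtypeL) - π ∘L G ∘L K.subtypeL) ∧
    Ring.inverse (1 - V * G) * V =
      K.subtypeL ∘L
        Ring.inverse (Ring.inverse (π ∘L V ∘L K.subtypeL) - π ∘L G ∘L K.subtypeL) ∘L π := by
  have hVK : LinearMap.range (V : 𝓗 →ₗ[ℂ] 𝓗) ≤ K := hK ▸ Submodule.le_topologicalClosure _
  exact ContinuousLinearMap.isUnit_inverse_sub_and_inverse_one_sub_mul_mul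
    (ContinuousLinearMap.eq_subtypeL_comp_compression_comp hV hVK hπ) hcomp hVG
end

section
/- Let H₀ be a bounded self-adjoint operator on ℓ²(ℤᵈ), Λ ⊆ ℤᵈ, V^Λ a bounded self-adjoint operator on ℓ²(Λ), V = Π*V^ΛΠ and H = H₀ + V. Let E be a real number not in the spectrum of H₀ and set G₀^Λ(E) = Π(E − H₀)⁻¹Π*. Then the map ψ ↦ Πψ restricts to a linear bijection from the eigenspace ker(H − E) in ℓ²(ℤᵈ) onto ker(1 − G₀^Λ(E)V^Λ) in ℓ²(Λ); in particular, E is an eigenvalue of H if and only if ker(1 − G₀^Λ(E)V^Λ) ≠ {0}, and its geometric multiplicity equals the dimension of that kernel. -/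
/-!
If `E - H₀` is invertible with inverse `R₀`, then `Hψ = Eψ` is equivalent to the fixed-point
equation `ψ = R₀ Φ* V Φ ψ`. Hence an eigenfunction is determined by its restriction `Φψ`, and
applying `Φ` turns the fixed-point equation into `Φψ = G₀ V (Φψ)`; conversely every solution
`φ = G₀ V φ` is the restriction of the eigenfunction `R₀ Φ* V φ` (Birman–Schwinger principle).
-/

noncomputable def LinearEquiv.ofBijOn {R M N F : Type*} [Semiring R] [AddCommMonoid M]
    [AddCommMonoid N] [Module R M] [Module R N] [FunLike F M N] [LinearMapClass F R M N] (f : F)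
    {p : Submodule R M} {q : Submodule R N} (h : Set.BijOn f p q) : p ≃ₗ[R] q :=
  LinearEquiv.ofBijective ((f : M →ₗ[R] N).restrict h.mapsTo)
    ⟨fun x y hxy => Subtype.ext (h.injOn x.2 y.2 (congrArg Subtype.val hxy)),
      fun y => let ⟨x, hx, hxy⟩ := h.surjOn y.2; ⟨⟨x, hx⟩, Subtype.ext hxy⟩⟩

theorem Submodule.ne_bot_iff_of_linearEquiv {R M N : Type*} [Semiring R] [AddCommMonoid M]
    [AddCommMonoid N] [Module R M] [Module R N] {p : Submodule R M} {q : Submodule R N}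
    (e : p ≃ₗ[R] q) : p ≠ ⊥ ↔ q ≠ ⊥ := by
  rw [← Submodule.nontrivial_iff_ne_bot, ← Submodule.nontrivial_iff_ne_bot]
  exact e.toEquiv.nontrivial_congr

namespace ContinuousLinearMap

section BirmanSchwinger

variable {R X Y : Type*} [Ring R]
  [TopologicalSpace X] [AddCommGroup X] [Module R X]
  [TopologicalSpace Y] [AddCommGroup Y] [Module R Y]
  {A : X →L[R] X} (P : X →L[R] Y) (Q : Y →L[R] X) (V : Y →L[R] Y)

theorem mem_ker_comp_sub_iff [IsTopologicalAddGroup X] (hA : IsUnit A) {ψ : X} :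
    ψ ∈ LinearMap.ker ((Q ∘L V ∘L P - A : X →L[R] X) : X →ₗ[R] X) ↔
      ψ = Ring.inverse A (Q (V (P ψ))) := by
  have hinv : Ring.inverse A * A = 1 := Ring.inverse_mul_cancel A hA
  have hinv' : A * Ring.inverse A = 1 := Ring.mul_inverse_cancel A hA
  rw [LinearMap.mem_ker, coe_coe, sub_apply, sub_eq_zero, comp_apply, comp_apply]
  constructor
  · intro h
    rw [h, ← mul_apply_eq_comp, hinv, one_apply_eq_self]
  · intro h
    conv_rhs => rw [h, ← mul_apply_eq_comp, hinv', one_apply_eq_self]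

theorem mem_ker_one_sub_mul_iff [IsTopologicalAddGroup Y] {φ : Y} :
    φ ∈ LinearMap.ker ((1 - (P ∘L Ring.inverse A ∘L Q) * V : Y →L[R] Y) : Y →ₗ[R] Y) ↔
      φ = P (Ring.inverse A (Q (V φ))) := by
  rw [LinearMap.mem_ker, coe_coe, sub_apply, sub_eq_zero, one_apply_eq_self, mul_apply_eq_comp]
  rfl

theorem bijOn_ker_comp_sub_ker_one_sub_mul [IsTopologicalAddGroup X] [IsTopologicalAddGroup Y]
    (hA : IsUnit A) :
    Set.BijOn P (LinearMap.ker ((Q ∘L V ∘L P - A : X →L[R] X) : X →ₗ[R] X))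
      (LinearMap.ker ((1 - (P ∘L Ring.inverse A ∘L Q) * V : Y →L[R] Y) : Y →ₗ[R] Y)) := by
  refine ⟨fun ψ hψ => ?_, fun ψ₁ h₁ ψ₂ h₂ h => ?_, fun φ hφ => ?_⟩
  · rw [SetLike.mem_coe, mem_ker_comp_sub_iff P Q V hA] at hψ
    rw [SetLike.mem_coe, mem_ker_one_sub_mul_iff, ← hψ]
  · rw [SetLike.mem_coe, mem_ker_comp_sub_iff P Q V hA] at h₁ h₂
    rw [h₁, h₂, h]
  · rw [SetLike.mem_coe, mem_ker_one_sub_mul_iff] at hφ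
    refine ⟨Ring.inverse A (Q (V φ)), ?_, hφ.symm⟩
    rw [SetLike.mem_coe, mem_ker_comp_sub_iff P Q V hA, ← hφ]

end BirmanSchwinger

theorem ker_sub_smul_one_ne_bot_iff {𝕜 X : Type*} [CommRing 𝕜] [TopologicalSpace X]
    [AddCommGroup X] [IsTopologicalAddGroup X] [Module 𝕜 X] [ContinuousConstSMul 𝕜 X]
    (H : X →L[𝕜] X) (E : 𝕜) :
    LinearMap.ker ((H - E • 1 : X →L[𝕜] X) : X →ₗ[𝕜] X) ≠ ⊥ ↔ ∃ ψ, ψ ≠ 0 ∧ H ψ = E • ψ := by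
  simp only [Submodule.ne_bot_iff, LinearMap.mem_ker, coe_coe, sub_apply, smul_apply,
    one_apply_eq_self, sub_eq_zero]
  exact exists_congr fun ψ => and_comm

end ContinuousLinearMap

theorem stmt4_general (d : ℕ) (Λ : Set (Fin d → ℤ))
    (H₀ : lp (fun _ : Fin d → ℤ => ℂ) 2 →L[ℂ] lp (fun _ : Fin d → ℤ => ℂ) 2)
    (Φ : lp (fun _ : Fin d → ℤ => ℂ) 2 →L[ℂ] lp (fun _ : Λ => ℂ) 2)
    (VΛ : lp (fun _ : Λ => ℂ) 2 →L[ℂ] lp (fun _ : Λ => ℂ) 2)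
    (E : ℝ) (hE : (E : ℂ) ∉ spectrum ℂ H₀) :
    ∀ H G₀Λ,
      H = H₀ + (ContinuousLinearMap.adjoint Φ) ∘L VΛ ∘L Φ →
      G₀Λ = Φ ∘L Ring.inverse ((E : ℂ) • 1 - H₀) ∘L ContinuousLinearMap.adjoint Φ →
      Set.BijOn (fun ψ => Φ ψ)
        (LinearMap.ker (((H - (E : ℂ) • 1 : lp (fun _ : Fin d → ℤ => ℂ) 2 →L[ℂ] lp (fun _ : Fin d → ℤ => ℂ) 2)) : lp (fun _ : Fin d → ℤ => ℂ) 2 →ₗ[ℂ] lp (fun _ : Fin d → ℤ => ℂ) 2) : Set (lp (fun _ : Fin d → ℤ => ℂ) 2))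
        (LinearMap.ker (((1 - G₀Λ * VΛ : lp (fun _ : Λ => ℂ) 2 →L[ℂ] lp (fun _ : Λ => ℂ) 2)) : lp (fun _ : Λ => ℂ) 2 →ₗ[ℂ] lp (fun _ : Λ => ℂ) 2) : Set (lp (fun _ : Λ => ℂ) 2)) ∧
      ((∃ ψ : lp (fun _ : Fin d → ℤ => ℂ) 2, ψ ≠ 0 ∧ H ψ = (E : ℂ) • ψ) ↔
        LinearMap.ker (((1 - G₀Λ * VΛ : lp (fun _ : Λ => ℂ) 2 →L[ℂ] lp (fun _ : Λ => ℂ) 2)) : lp (fun _ : Λ => ℂ) 2 →ₗ[ℂ] lp (fun _ : Λ => ℂ) 2) ≠ ⊥) ∧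
      Module.rank ℂ (LinearMap.ker (((H - (E : ℂ) • 1 : lp (fun _ : Fin d → ℤ => ℂ) 2 →L[ℂ] lp (fun _ : Fin d → ℤ => ℂ) 2)) : lp (fun _ : Fin d → ℤ => ℂ) 2 →ₗ[ℂ] lp (fun _ : Fin d → ℤ => ℂ) 2)) =
        Module.rank ℂ (LinearMap.ker (((1 - G₀Λ * VΛ : lp (fun _ : Λ => ℂ) 2 →L[ℂ] lp (fun _ : Λ => ℂ) 2)) : lp (fun _ : Λ => ℂ) 2 →ₗ[ℂ] lp (fun _ : Λ => ℂ) 2)) := by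
  rintro H G₀Λ rfl rfl
  have hunit : IsUnit ((E : ℂ) • 1 - H₀) := by
    simpa only [Algebra.algebraMap_eq_smul_one] using spectrum.notMem_iff.mp hE
  have hshift : H₀ + (ContinuousLinearMap.adjoint Φ) ∘L VΛ ∘L Φ - (E : ℂ) • 1 =
      (ContinuousLinearMap.adjoint Φ) ∘L VΛ ∘L Φ - ((E : ℂ) • 1 - H₀) := by
    abel
  have hbij := ContinuousLinearMap.bijOn_ker_comp_sub_ker_one_sub_mul Φ
    (ContinuousLinearMap.adjoint Φ) VΛ hunit
  rw [← hshift] at hbij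
  have e := LinearEquiv.ofBijOn Φ hbij
  exact ⟨hbij, (ContinuousLinearMap.ker_sub_smul_one_ne_bot_iff _ _).symm.trans
    (Submodule.ne_bot_iff_of_linearEquiv e), e.rank_eq⟩

/-- For `H = H₀ + Φ* VΛ Φ` and a real `E` outside the spectrum of `H₀`,
the restriction map `Φ` restricts to a linear bijection from the eigenspace `ker(H - E)`
onto `ker(1 - G₀^Λ(E) VΛ)`; in particular `E` is an eigenvalue of `H` iff this kernel is
nonzero, and the geometric multiplicity equals its dimension. -/
theorem stmt4 (d : ℕ) (Λ : Set (Fin d → ℤ))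
    (H₀ : lp (fun _ : Fin d → ℤ => ℂ) 2 →L[ℂ] lp (fun _ : Fin d → ℤ => ℂ) 2)
    (hH₀ : IsSelfAdjoint H₀)
    (Φ : lp (fun _ : Fin d → ℤ => ℂ) 2 →L[ℂ] lp (fun _ : Λ => ℂ) 2)
    (hΦ : ∀ (f : lp (fun _ : Fin d → ℤ => ℂ) 2) (n : Λ), (Φ f) n = f n)
    (hΦcoiso : Φ ∘L ContinuousLinearMap.adjoint Φ = 1)
    (VΛ : lp (fun _ : Λ => ℂ) 2 →L[ℂ] lp (fun _ : Λ => ℂ) 2)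
    (hVΛ : IsSelfAdjoint VΛ)
    (E : ℝ) (hE : (E : ℂ) ∉ spectrum ℂ H₀) :
    ∀ H G₀Λ,
      H = H₀ + (ContinuousLinearMap.adjoint Φ) ∘L VΛ ∘L Φ →
      G₀Λ = Φ ∘L Ring.inverse ((E : ℂ) • 1 - H₀) ∘L ContinuousLinearMap.adjoint Φ →
      Set.BijOn (fun ψ => Φ ψ)
        (LinearMap.ker (((H - (E : ℂ) • 1 : lp (fun _ : Fin d → ℤ => ℂ) 2 →L[ℂ] lp (fun _ : Fin d → ℤ => ℂ) 2)) : lp (fun _ : Fin d → ℤ => ℂ) 2 →ₗ[ℂ] lp (fun _ : Fin d → ℤ => ℂ) 2) : Set (lp (fun _ : Fin d → ℤ => ℂ) 2))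
        (LinearMap.ker (((1 - G₀Λ * VΛ : lp (fun _ : Λ => ℂ) 2 →L[ℂ] lp (fun _ : Λ => ℂ) 2)) : lp (fun _ : Λ => ℂ) 2 →ₗ[ℂ] lp (fun _ : Λ => ℂ) 2) : Set (lp (fun _ : Λ => ℂ) 2)) ∧
      ((∃ ψ : lp (fun _ : Fin d → ℤ => ℂ) 2, ψ ≠ 0 ∧ H ψ = (E : ℂ) • ψ) ↔
        LinearMap.ker (((1 - G₀Λ * VΛ : lp (fun _ : Λ => ℂ) 2 →L[ℂ] lp (fun _ : Λ => ℂ) 2)) : lp (fun _ : Λ => ℂ) 2 →ₗ[ℂ] lp (fun _ : Λ => ℂ) 2) ≠ ⊥) ∧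
      Module.rank ℂ (LinearMap.ker (((H - (E : ℂ) • 1 : lp (fun _ : Fin d → ℤ => ℂ) 2 →L[ℂ] lp (fun _ : Fin d → ℤ => ℂ) 2)) : lp (fun _ : Fin d → ℤ => ℂ) 2 →ₗ[ℂ] lp (fun _ : Fin d → ℤ => ℂ) 2)) =
        Module.rank ℂ (LinearMap.ker (((1 - G₀Λ * VΛ : lp (fun _ : Λ => ℂ) 2 →L[ℂ] lp (fun _ : Λ => ℂ) 2)) : lp (fun _ : Λ => ℂ) 2 →ₗ[ℂ] lp (fun _ : Λ => ℂ) 2)) :=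
  stmt4_general d Λ H₀ Φ VΛ E hE
end

section
/- Let H₀ be a bounded self-adjoint operator on ℓ²(ℤᵈ), Λ ⊆ ℤᵈ, V^Λ a bounded self-adjoint operator on ℓ²(Λ), V = Π*V^ΛΠ and H = H₀ + V. Let E be a real number not in the spectrum of H₀ and G₀^Λ(E) = Π(E − H₀)⁻¹Π*. If ‖V^Λ‖·‖G₀^Λ(E)‖ < 1, then E is not an eigenvalue of H. -/
/-!
Birman–Schwinger argument: if `Hψ = Eψ` then `ψ = (E - H₀)⁻¹ Π* V^Λ Π ψ`, so `Πψ` is a fixed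
point of the contraction `G₀^Λ(E) V^Λ`; hence `Πψ = 0`, and then `ψ = (E - H₀)⁻¹ Π* V^Λ 0 = 0`.
-/

open ContinuousLinearMap

variable {𝕜 X Y : Type*} [NontriviallyNormedField 𝕜]
  [NormedAddCommGroup X] [NormedSpace 𝕜 X] [NormedAddCommGroup Y] [NormedSpace 𝕜 Y]

namespace ContinuousLinearMap

theorem eq_zero_of_apply_eq_self_of_opNorm_lt_one {S : Y →L[𝕜] Y} (hS : ‖S‖ < 1) {y : Y}
    (hy : S y = y) : y = 0 := by
  by_contra hne
  have : ‖y‖ < ‖y‖ :=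
    calc ‖y‖ = ‖S y‖ := by rw [hy]
      _ ≤ ‖S‖ * ‖y‖ := S.le_opNorm y
      _ < 1 * ‖y‖ := mul_lt_mul_of_pos_right hS (norm_pos_iff.mpr hne)
      _ = ‖y‖ := one_mul _
  exact lt_irrefl _ this

theorem eq_resolvent_apply_of_add_apply_eq_smul {T K : X →L[𝕜] X} {E : 𝕜}
    (hE : E ∉ spectrum 𝕜 T) {ψ : X} (hψ : (T + K) ψ = E • ψ) :
    ψ = Ring.inverse (E • (1 : X →L[𝕜] X) - T) (K ψ) := by
  have hunit : IsUnit (E • (1 : X →L[𝕜] X) - T) := by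
    simpa only [Algebra.algebraMap_eq_smul_one] using spectrum.notMem_iff.mp hE
  have hshift : (E • (1 : X →L[𝕜] X) - T) ψ = K ψ := by
    rw [sub_apply, smul_apply, one_apply_eq_self, ← hψ, add_apply, add_sub_cancel_left]
  rw [← hshift]
  exact (DFunLike.congr_fun (Ring.inverse_mul_cancel _ hunit) ψ).symm

theorem eq_zero_of_add_sandwich_apply_eq_smul_of_norm_mul_lt_one {T : X →L[𝕜] X}
    {P : X →L[𝕜] Y} {J : Y →L[𝕜] X} {W : Y →L[𝕜] Y} {E : 𝕜} (hE : E ∉ spectrum 𝕜 T)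
    (hsmall : ‖W‖ * ‖P ∘L Ring.inverse (E • (1 : X →L[𝕜] X) - T) ∘L J‖ < 1) {ψ : X}
    (hψ : (T + J ∘L W ∘L P) ψ = E • ψ) : ψ = 0 := by
  set R := Ring.inverse (E • (1 : X →L[𝕜] X) - T)
  have hres : ψ = R (J (W (P ψ))) := eq_resolvent_apply_of_add_apply_eq_smul hE hψ
  have hfix : ((P ∘L R ∘L J) ∘L W) (P ψ) = P ψ := by
    conv_rhs => rw [hres]
    rfl
  have hPψ : P ψ = 0 :=
    eq_zero_of_apply_eq_self_of_opNorm_lt_one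
      ((opNorm_comp_le _ _).trans_lt (by rwa [mul_comm])) hfix
  rw [hres, hPψ, map_zero, map_zero, map_zero]

end ContinuousLinearMap

theorem stmt5_general (d : ℕ) (Λ : Set (Fin d → ℤ))
    (H₀ : lp (fun _ : Fin d → ℤ => ℂ) 2 →L[ℂ] lp (fun _ : Fin d → ℤ => ℂ) 2)
    (Φ : lp (fun _ : Fin d → ℤ => ℂ) 2 →L[ℂ] lp (fun _ : Λ => ℂ) 2)
    (VΛ : lp (fun _ : Λ => ℂ) 2 →L[ℂ] lp (fun _ : Λ => ℂ) 2)
    (E : ℝ) (hE : (E : ℂ) ∉ spectrum ℂ H₀)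
    (hsmall :
      ‖VΛ‖ * ‖Φ ∘L Ring.inverse ((E : ℂ) • 1 - H₀) ∘L ContinuousLinearMap.adjoint Φ‖ < 1) :
    ∀ ψ : lp (fun _ : Fin d → ℤ => ℂ) 2,
      (H₀ + (ContinuousLinearMap.adjoint Φ) ∘L VΛ ∘L Φ) ψ = (E : ℂ) • ψ → ψ = 0 :=
  fun _ hψ => eq_zero_of_add_sandwich_apply_eq_smul_of_norm_mul_lt_one hE hsmall hψ

/-- For `H = H₀ + Φ* VΛ Φ` and a real `E` outside the spectrum of `H₀` with
`‖VΛ‖·‖G₀^Λ(E)‖ < 1`, the energy `E` is not an eigenvalue of `H`. -/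
theorem stmt5 (d : ℕ) (Λ : Set (Fin d → ℤ))
    (H₀ : lp (fun _ : Fin d → ℤ => ℂ) 2 →L[ℂ] lp (fun _ : Fin d → ℤ => ℂ) 2)
    (hH₀ : IsSelfAdjoint H₀)
    (Φ : lp (fun _ : Fin d → ℤ => ℂ) 2 →L[ℂ] lp (fun _ : Λ => ℂ) 2)
    (hΦ : ∀ (f : lp (fun _ : Fin d → ℤ => ℂ) 2) (n : Λ), (Φ f) n = f n)
    (hΦcoiso : Φ ∘L ContinuousLinearMap.adjoint Φ = 1)
    (VΛ : lp (fun _ : Λ => ℂ) 2 →L[ℂ] lp (fun _ : Λ => ℂ) 2)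
    (hVΛ : IsSelfAdjoint VΛ)
    (E : ℝ) (hE : (E : ℂ) ∉ spectrum ℂ H₀)
    (hsmall :
      ‖VΛ‖ * ‖Φ ∘L Ring.inverse ((E : ℂ) • 1 - H₀) ∘L ContinuousLinearMap.adjoint Φ‖ < 1) :
    ∀ ψ : lp (fun _ : Fin d → ℤ => ℂ) 2,
      (H₀ + (ContinuousLinearMap.adjoint Φ) ∘L VΛ ∘L Φ) ψ = (E : ℂ) • ψ → ψ = 0 :=
  stmt5_general d Λ H₀ Φ VΛ E hE hsmall
end

section
/- Let H₀ be a bounded self-adjoint operator on a complex Hilbert space 𝓗. For every E ∈ ℝ, ε > 0 and every v ∈ 𝓗, one has −Im⟨v, ((E + iε) − H₀)⁻¹ v⟩ ≥ (ε / ((|E| + ‖H₀‖)² + ε²)) · ‖v‖². -/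
/-!
Put `z = E + iε` and `w = (z - H₀)⁻¹ v`, so that `v = (z - H₀) w`. Since `H₀` is self-adjoint,
`⟪H₀ w, w⟫` is real, hence `Im ⟪v, w⟫ = Im ⟪(z - H₀) w, w⟫ = -ε ‖w‖²`. For the same reason the
two summands of `(z - H₀) w = (E - H₀) w + iε w` are orthogonal in the real sense, so
`‖v‖² = ‖(E - H₀) w‖² + ε² ‖w‖² ≤ ((|E| + ‖H₀‖)² + ε²) ‖w‖²`.
-/

open scoped InnerProductSpace

theorem IsSelfAdjoint.isUnit_smul_one_sub_s8 {A : Type*} [CStarAlgebra A] {a : A}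
    (ha : IsSelfAdjoint a) {z : ℂ} (hz : z.im ≠ 0) : IsUnit (z • 1 - a) := by
  rw [← Algebra.algebraMap_eq_smul_one, ← spectrum.notMem_iff]
  intro hmem
  apply hz
  rw [ha.mem_spectrum_eq_re hmem, Complex.ofReal_im]

namespace LinearMap.IsSymmetric

variable {𝓗 : Type*} [NormedAddCommGroup 𝓗] [InnerProductSpace ℂ 𝓗] {T : 𝓗 →L[ℂ] 𝓗}

theorem im_inner_smul_one_sub_apply_self (hT : (T : 𝓗 →ₗ[ℂ] 𝓗).IsSymmetric) (z : ℂ) (x : 𝓗) :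
    (⟪(z • 1 - T) x, x⟫_ℂ).im = -(z.im * ‖x‖ ^ 2) := by
  have hTx : (⟪T x, x⟫_ℂ).im = 0 := hT.im_inner_apply_self x
  simp only [_root_.sub_apply, _root_.smul_apply, one_apply_eq_self, inner_sub_left,
    inner_smul_left, inner_self_eq_norm_sq_to_K, Complex.sub_im, Complex.mul_im, Complex.conj_re,
    Complex.conj_im, hTx, RCLike.ofReal_eq_complex_ofReal, ← Complex.ofReal_pow,
    Complex.ofReal_re, Complex.ofReal_im]
  ring

theorem norm_apply_add_I_smul_sq (hT : (T : 𝓗 →ₗ[ℂ] 𝓗).IsSymmetric) (t : ℝ) (x : 𝓗) :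
    ‖T x + ((t : ℂ) * Complex.I) • x‖ ^ 2 = ‖T x‖ ^ 2 + t ^ 2 * ‖x‖ ^ 2 := by
  have hTx : (⟪T x, x⟫_ℂ).im = 0 := hT.im_inner_apply_self x
  have hcross : RCLike.re ⟪T x, ((t : ℂ) * Complex.I) • x⟫_ℂ = 0 := by simp [hTx]
  rw [@norm_add_sq ℂ, hcross, norm_smul]
  simp only [norm_mul, Complex.norm_real, Complex.norm_I, Real.norm_eq_abs]
  rw [mul_pow, mul_one, sq_abs]
  ring

theorem norm_smul_one_sub_apply_sq_le (hT : (T : 𝓗 →ₗ[ℂ] 𝓗).IsSymmetric) (z : ℂ) (x : 𝓗) :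
    ‖(z • 1 - T) x‖ ^ 2 ≤ ((|z.re| + ‖T‖) ^ 2 + z.im ^ 2) * ‖x‖ ^ 2 := by
  set S : 𝓗 →L[ℂ] 𝓗 := (z.re : ℂ) • 1 - T
  have hS : (S : 𝓗 →ₗ[ℂ] 𝓗).IsSymmetric := fun x y => by
    simp only [S, ContinuousLinearMap.coe_coe, _root_.sub_apply, _root_.smul_apply,
      one_apply_eq_self, inner_sub_left, inner_sub_right, inner_smul_left, inner_smul_right,
      Complex.conj_ofReal]
    rw [hT.apply_clm]
  have hsplit : (z • 1 - T) x = S x + ((z.im : ℂ) * Complex.I) • x := by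
    simp only [S, _root_.sub_apply, _root_.smul_apply, one_apply_eq_self]
    conv_lhs => rw [← Complex.re_add_im z]
    rw [add_smul]
    abel
  have hSx : ‖S x‖ ≤ (|z.re| + ‖T‖) * ‖x‖ := calc
    ‖S x‖ = ‖(z.re : ℂ) • x - T x‖ := by simp [S]
    _ ≤ |z.re| * ‖x‖ + ‖T‖ * ‖x‖ := by
      grw [norm_sub_le, norm_smul, T.le_opNorm, Complex.norm_real, Real.norm_eq_abs]
    _ = (|z.re| + ‖T‖) * ‖x‖ := by ring
  rw [hsplit, hS.norm_apply_add_I_smul_sq]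
  have hSx_sq := pow_le_pow_left₀ (norm_nonneg _) hSx 2
  rw [mul_pow] at hSx_sq
  linarith

end LinearMap.IsSymmetric

/-- For a bounded self-adjoint operator `H₀` on a complex Hilbert space,
every `E ∈ ℝ`, `ε > 0` and every vector `v`,
`−Im ⟨v, ((E + iε) − H₀)⁻¹ v⟩ ≥ (ε / ((|E| + ‖H₀‖)² + ε²)) ‖v‖²`. -/
theorem stmt8 {𝓗 : Type*} [NormedAddCommGroup 𝓗] [InnerProductSpace ℂ 𝓗] [CompleteSpace 𝓗]
    (H₀ : 𝓗 →L[ℂ] 𝓗) (hH₀ : IsSelfAdjoint H₀)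
    (E ε : ℝ) (hε : 0 < ε) (v : 𝓗) :
    (ε / ((|E| + ‖H₀‖) ^ 2 + ε ^ 2)) * ‖v‖ ^ 2 ≤
      -(inner ℂ v ((Ring.inverse (((E : ℂ) + ε * Complex.I) • 1 - H₀)) v) : ℂ).im := by
  set z : ℂ := (E : ℂ) + ε * Complex.I
  have hz_re : z.re = E := by simp [z]
  have hz_im : z.im = ε := by simp [z]
  have hunit := hH₀.isUnit_smul_one_sub_s8 (z := z) (by rw [hz_im]; exact hε.ne')
  set w := Ring.inverse (z • 1 - H₀) v
  have hv : (z • 1 - H₀) w = v := by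
    simpa using congr($(Ring.mul_inverse_cancel _ hunit) v)
  have him : (⟪v, w⟫_ℂ).im = -(ε * ‖w‖ ^ 2) := by
    rw [← hz_im, ← hH₀.isSymmetric.im_inner_smul_one_sub_apply_self z w, hv]
  have hnorm := hH₀.isSymmetric.norm_smul_one_sub_apply_sq_le z w
  rw [hv, hz_re, hz_im] at hnorm
  rw [him, neg_neg, div_mul_eq_mul_div, div_le_iff₀ (by positivity)]
  linarith [mul_le_mul_of_nonneg_left hnorm hε.le]
end

section
/- Let 𝓗 be a complex Hilbert space, V a bounded self-adjoint operator and G a bounded operator on 𝓗 such that 1 − VG is invertible, and set T = (1 − VG)⁻¹V. Then 1 − G*V is invertible, T* = V(1 − G*V)⁻¹, and the optical-theorem identity T − T* = T(G − G*)T* holds. -/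
noncomputable section

open ContinuousLinearMap

/-- For a bounded self-adjoint `V` and a bounded `G` on a complex Hilbert
space with `1 - V G` invertible, setting `T = (1 - V G)⁻¹ V`: the operator `1 - G* V`
is invertible, `T* = V (1 - G* V)⁻¹`, and `T - T* = T (G - G*) T*`. -/
theorem stmt10 {𝓗 : Type*} [NormedAddCommGroup 𝓗] [InnerProductSpace ℂ 𝓗] [CompleteSpace 𝓗]
    (V G : 𝓗 →L[ℂ] 𝓗) (hV : IsSelfAdjoint V)
    (hVG : IsUnit (1 - V * G)) :
    ∀ T : 𝓗 →L[ℂ] 𝓗, T = Ring.inverse (1 - V * G) * V →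
      IsUnit (1 - star G * V) ∧
      star T = V * Ring.inverse (1 - star G * V) ∧
      T - star T = T * (G - star G) * star T := by
  intro T hT
  have hVs : star V = V := hV
  have hstar : star (1 - V * G) = 1 - star G * V := by
    simp [star_sub, star_mul, hVs]
  have hb : IsUnit (1 - star G * V) := hstar ▸ hVG.star
  have hTs : star T = V * Ring.inverse (1 - star G * V) := by
    rw [hT, star_mul, hVs, ← hstar, ← Ring.inverse_star]
  refine ⟨hb, hTs, ?_⟩
  set a := 1 - V * G with ha
  set b := 1 - star G * V with hbdef
  have key : V * (G - star G) * V = V * b - a * V := by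
    rw [ha, hbdef]; noncomm_ring
  have h1 : a * Ring.inverse a = 1 := Ring.mul_inverse_cancel a hVG
  have h2 : Ring.inverse a * a = 1 := Ring.inverse_mul_cancel a hVG
  have h3 : b * Ring.inverse b = 1 := Ring.mul_inverse_cancel b hb
  symm
  calc T * (G - star G) * star T
      = Ring.inverse a * (V * (G - star G) * V) * Ring.inverse b := by
        rw [hTs, hT]; noncomm_ring
    _ = Ring.inverse a * (V * b - a * V) * Ring.inverse b := by rw [key]
    _ = Ring.inverse a * V * (b * Ring.inverse b)
          - Ring.inverse a * a * (V * Ring.inverse b) := by noncomm_ring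
    _ = T - star T := by rw [h2, h3, one_mul, mul_one, ← hT, ← hTs]
end
end

section
/- Let 𝓗 be a complex Hilbert space, V a bounded self-adjoint operator, K a positive bounded operator, and G a bounded operator on 𝓗 satisfying G − G* = −2iK, and assume 1 − VG is invertible. Then the operator S = 1 − 2i K^{1/2}(1 − VG)⁻¹V K^{1/2} is unitary, where K^{1/2} denotes the positive square root of K. -/
noncomputable section

open ContinuousLinearMap

/-- Let `V` be bounded self-adjoint, `K` positive with positive square root
`R` (`R ≥ 0`, `R·R = K`), and `G` bounded with `G - G* = -2iK`; assume `1 - V G` invertible.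
Then `S = 1 - 2i R (1 - V G)⁻¹ V R` is unitary. -/
theorem stmt11 {𝓗 : Type*} [NormedAddCommGroup 𝓗] [InnerProductSpace ℂ 𝓗] [CompleteSpace 𝓗]
    (V K G R : 𝓗 →L[ℂ] 𝓗) (hV : IsSelfAdjoint V)
    (hK : K.IsPositive)
    (hR : R.IsPositive) (hRK : R * R = K)
    (hG : G - star G = (-(2 * Complex.I)) • K)
    (hVG : IsUnit (1 - V * G)) :
    (1 - (2 * Complex.I) • (R * (Ring.inverse (1 - V * G) * V) * R)) ∈
      unitary (𝓗 →L[ℂ] 𝓗) := by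
  set u : ℂ := 2 * Complex.I with hu
  have hVs : star V = V := hV.star_eq
  have hRs : star R = R := hR.isSelfAdjoint.star_eq
  set Gs := star G with hGsdef
  set B := Ring.inverse (1 - V * G) with hBdef
  have hB1 : (1 - V * G) * B = 1 := Ring.mul_inverse_cancel _ hVG
  have hB2 : B * (1 - V * G) = 1 := Ring.inverse_mul_cancel _ hVG
  set D := star B with hDdef
  have hsVG : star (1 - V * G) = 1 - Gs * V := by
    simp [star_sub, star_mul, hVs, hGsdef]
  have hD1 : (1 - Gs * V) * D = 1 := by
    have := congrArg star hB2
    simpa [star_mul, hsVG] using this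
  have hD2 : D * (1 - Gs * V) = 1 := by
    have := congrArg star hB1
    simpa [star_mul, hsVG] using this
  -- C : inverse of (1 - G*V)
  set C := (1 : 𝓗 →L[ℂ] 𝓗) + G * B * V with hCdef
  have hB1' : B - V * G * B = 1 := by
    have h := hB1; rwa [sub_mul, one_mul, mul_assoc] at h
  have hB2' : B - B * (V * G) = 1 := by
    have h := hB2; rwa [mul_sub, mul_one] at h
  have hC1 : (1 - G * V) * C = 1 := by
    have e : (1 - G * V) * C = 1 + G * ((B - V * G * B) - 1) * V := by
      rw [hCdef]; noncomm_ring
    rw [e, hB1', sub_self, mul_zero, zero_mul, add_zero]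
  have hC2 : C * (1 - G * V) = 1 := by
    have e : C * (1 - G * V) = 1 + G * ((B - B * (V * G)) - 1) * V := by
      rw [hCdef]; noncomm_ring
    rw [e, hB2', sub_self, mul_zero, zero_mul, add_zero]
  set Cs := star C with hCsdef
  have hsGV : star (1 - G * V) = 1 - V * Gs := by
    simp [star_sub, star_mul, hVs, hGsdef]
  have hCs1 : Cs * (1 - V * Gs) = 1 := by
    have := congrArg star hC1
    simpa [star_mul, hsGV] using this
  have hCs2 : (1 - V * Gs) * Cs = 1 := by
    have := congrArg star hC2
    simpa [star_mul, hsGV] using this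
  -- swap identities
  have hswap1 : B * V = V * C := by
    calc B * V = B * (V * ((1 - G * V) * C)) := by rw [hC1, mul_one]
      _ = (B * (1 - V * G)) * (V * C) := by noncomm_ring
      _ = V * C := by rw [hB2, one_mul]
  have hswap2 : V * D = Cs * V := by
    have := congrArg star hswap1
    simpa [star_mul, hVs, hDdef, hCsdef] using this
  -- sandwiched imaginary part
  have hVGV : V * (G - Gs) * V = (-u) • (V * K * V) := by
    rw [hGsdef, hG]
    simp [smul_mul_assoc, mul_smul_comm]
  have hVGV2 : V * (Gs - G) * V = u • (V * K * V) := by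
    have e : V * (Gs - G) * V = -(V * (G - Gs) * V) := by noncomm_ring
    rw [e, hVGV, neg_smul, neg_neg]
  have inner1 : V * (1 - Gs * V) - (1 - V * G) * V = V * (G - Gs) * V := by
    noncomm_ring
  have inner2 : V * (1 - G * V) - (1 - V * Gs) * V = V * (Gs - G) * V := by
    noncomm_ring
  -- key' : A - A* = -u • (A * K * A*)
  have key' : B * V - V * D = (-u) • ((B * V) * K * (V * D)) := by
    calc B * V - V * D
        = B * (V * ((1 - Gs * V) * D)) - (B * (1 - V * G)) * (V * D) := by
          rw [hD1, hB2]; simp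
      _ = B * (V * (1 - Gs * V) - (1 - V * G) * V) * D := by noncomm_ring
      _ = B * (V * (G - Gs) * V) * D := by rw [inner1]
      _ = B * ((-u) • (V * K * V)) * D := by rw [hVGV]
      _ = (-u) • (B * (V * K * V) * D) := by
          rw [mul_smul_comm, smul_mul_assoc]
      _ = (-u) • ((B * V) * K * (V * D)) := by
          congr 1 <;> noncomm_ring
  -- key : A - A* = -u • (A* * K * A)
  have key : B * V - V * D = (-u) • ((V * D) * K * (B * V)) := by
    have h1 : Cs * V - V * C = u • ((V * D) * K * (B * V)) := by
      calc Cs * V - V * C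
          = Cs * (V * ((1 - G * V) * C)) - (Cs * (1 - V * Gs)) * (V * C) := by
            rw [hC1, hCs1, mul_one, one_mul]
        _ = Cs * (V * (1 - G * V) - (1 - V * Gs) * V) * C := by noncomm_ring
        _ = Cs * (V * (Gs - G) * V) * C := by rw [inner2]
        _ = Cs * (u • (V * K * V)) * C := by rw [hVGV2]
        _ = u • (Cs * (V * K * V) * C) := by
            rw [mul_smul_comm, smul_mul_assoc]
        _ = u • ((Cs * V) * K * (V * C)) := by congr 1 <;> noncomm_ring
        _ = u • ((V * D) * K * (B * V)) := by rw [← hswap1, ← hswap2]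
    calc B * V - V * D = -(Cs * V - V * C) := by rw [← hswap1, ← hswap2]; abel
      _ = -(u • ((V * D) * K * (B * V))) := by rw [h1]
      _ = (-u) • ((V * D) * K * (B * V)) := by rw [neg_smul]
  -- now the unitarity computation
  set A := B * V with hAdef
  have hAs : star A = V * D := by
    rw [hAdef, star_mul, hVs, hDdef]
  set P := R * (V * D) * R with hPdef
  set Q := R * A * R with hQdef
  have hstarQ : star Q = P := by
    rw [hQdef, hPdef, star_mul, star_mul, hRs, hAs]
    noncomm_ring
  have hustar : (starRingEnd ℂ) u = -u := by
    rw [hu, map_mul, Complex.conj_I, map_ofNat]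
    ring
  have hstarS : star (1 - u • Q) = 1 + u • P := by
    rw [star_sub, star_smul, star_one, hstarQ]
    rw [starRingEnd_apply] at hustar
    rw [hustar, neg_smul, sub_neg_eq_add]
  have hPQ : P * Q = R * ((V * D) * K * A) * R := by
    rw [hPdef, hQdef, ← hRK]; noncomm_ring
  have hQP : Q * P = R * (A * K * (V * D)) * R := by
    rw [hPdef, hQdef, ← hRK]; noncomm_ring
  have hPmQ : P - Q = u • (R * ((V * D) * K * A) * R) := by
    have e : P - Q = R * ((V * D) - A) * R := by
      rw [hPdef, hQdef]; noncomm_ring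
    have e2 : (V * D) - A = u • ((V * D) * K * A) := by
      rw [hAdef] at key ⊢
      have := congrArg Neg.neg key
      rw [neg_sub, neg_smul, neg_neg] at this
      exact this
    rw [e, e2, mul_smul_comm, smul_mul_assoc]
  have hPmQ' : P - Q = u • (R * (A * K * (V * D)) * R) := by
    have e : P - Q = R * ((V * D) - A) * R := by
      rw [hPdef, hQdef]; noncomm_ring
    have e2 : (V * D) - A = u • (A * K * (V * D)) := by
      rw [hAdef] at key' ⊢
      have := congrArg Neg.neg key'
      rw [neg_sub, neg_smul, neg_neg] at this
      exact this
    rw [e, e2, mul_smul_comm, smul_mul_assoc]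
  have expand1 : (1 + u • P) * (1 - u • Q)
      = 1 + u • (P - Q) - (u * u) • (P * Q) := by
    rw [mul_sub, mul_one, add_mul, one_mul, smul_mul_assoc, mul_smul_comm,
      smul_smul, smul_sub]
    abel
  have expand2 : (1 - u • Q) * (1 + u • P)
      = 1 + u • (P - Q) - (u * u) • (Q * P) := by
    rw [mul_add, mul_one, sub_mul, one_mul, smul_mul_assoc, mul_smul_comm,
      smul_smul, smul_sub]
    abel
  rw [Unitary.mem_iff]
  constructor
  · rw [hstarS, expand1, hPQ, hPmQ, smul_smul]
    abel
  · rw [hstarS, expand2, hQP, hPmQ', smul_smul]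
    abel
end
end

section
/- Let 𝓗 and 𝓚 be complex Hilbert spaces, α a bounded self-adjoint operator on 𝓗 and β : 𝓗 → 𝓚 a bounded operator. Then for either sign, ker(α − iβ*β) = ker(α) ∩ ker(β) and ker(α + iβ*β) = ker(α) ∩ ker(β). -/
noncomputable section

open ContinuousLinearMap

open RCLike in
theorem ContinuousLinearMap.IsSelfAdjoint.ker_add_smul_adjoint_comp_self
    {𝕜 E F : Type*} [RCLike 𝕜]
    [NormedAddCommGroup E] [InnerProductSpace 𝕜 E] [CompleteSpace E]
    [NormedAddCommGroup F] [InnerProductSpace 𝕜 F] [CompleteSpace F]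
    {α : E →L[𝕜] E} (hα : IsSelfAdjoint α) (β : E →L[𝕜] F) {c : 𝕜} (hc : re c = 0)
    (hc₀ : c ≠ 0) :
    LinearMap.ker ((α + c • (adjoint β ∘L β) : E →L[𝕜] E) : E →ₗ[𝕜] E) =
      LinearMap.ker (α : E →ₗ[𝕜] E) ⊓ LinearMap.ker (β : E →ₗ[𝕜] F) := by
  ext x
  simp only [LinearMap.mem_ker, Submodule.mem_inf, coe_coe, add_apply, smul_apply, comp_apply]
  refine ⟨fun h => ?_, fun ⟨hαx, hβx⟩ => by simp [hαx, hβx]⟩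
  -- `⟪x, α x⟫` is real and `⟪x, β† β x⟫ = ‖β x‖²`, so the imaginary part of `⟪x, h⟫` is `im c ‖β x‖²`.
  have him : im c * ‖β x‖ ^ 2 = 0 := by
    have hαx : im (inner 𝕜 x (α x)) = 0 := hα.isSymmetric.im_inner_self_apply x
    have := congrArg im (congrArg (inner 𝕜 x) h)
    rwa [inner_add_right, inner_smul_right, adjoint_inner_right, inner_self_eq_norm_sq_to_K,
      inner_zero_right, map_add, hαx, zero_add, ← ofReal_pow, im_mul_ofReal, map_zero] at this
  have hc_im : im c ≠ 0 := fun h' => hc₀ (RCLike.ext (by simpa using hc) (by simpa using h'))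
  have hβx : β x = 0 := by simpa [hc_im] using him
  exact ⟨by simpa [hβx] using h, hβx⟩

/-- For a bounded self-adjoint `α` on `𝓗` and a bounded `β : 𝓗 → 𝓚`,
`ker(α − iβ*β) = ker α ∩ ker β` and `ker(α + iβ*β) = ker α ∩ ker β`. -/
theorem stmt13 {𝓗 𝓚 : Type*}
    [NormedAddCommGroup 𝓗] [InnerProductSpace ℂ 𝓗] [CompleteSpace 𝓗]
    [NormedAddCommGroup 𝓚] [InnerProductSpace ℂ 𝓚] [CompleteSpace 𝓚]
    (α : 𝓗 →L[ℂ] 𝓗) (hα : IsSelfAdjoint α)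
    (β : 𝓗 →L[ℂ] 𝓚) :
    LinearMap.ker ((α - Complex.I • (ContinuousLinearMap.adjoint β ∘L β) : 𝓗 →L[ℂ] 𝓗) : 𝓗 →ₗ[ℂ] 𝓗) =
        LinearMap.ker (α : 𝓗 →ₗ[ℂ] 𝓗) ⊓ LinearMap.ker (β : 𝓗 →ₗ[ℂ] 𝓚) ∧
    LinearMap.ker ((α + Complex.I • (ContinuousLinearMap.adjoint β ∘L β) : 𝓗 →L[ℂ] 𝓗) : 𝓗 →ₗ[ℂ] 𝓗) =
        LinearMap.ker (α : 𝓗 →ₗ[ℂ] 𝓗) ⊓ LinearMap.ker (β : 𝓗 →ₗ[ℂ] 𝓚) := by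
  refine ⟨?_, hα.ker_add_smul_adjoint_comp_self β Complex.I_re Complex.I_ne_zero⟩
  rw [sub_eq_add_neg, ← neg_smul]
  exact hα.ker_add_smul_adjoint_comp_self β (by simp) (neg_ne_zero.mpr Complex.I_ne_zero)
end
end
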